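/- Consistency of the discrete-gradient-dependent integrator with the finite-dimensional metric bracket (Theorem 1): fix V = (v_1,…,v_N) ∈ (ℝ³)^N with v_p ≠ v_p̄ whenever 𝟙(p,p̄) = 1, and let F, S : (ℝ³)^N → ℝ be continuously differentiable. For V' ∈ (ℝ³)^N define the discrete collisional rate D(V') = (1/2) Σ_{p,p̄} Γ̄(F,p,p̄; V,V')ᵀ [ν w_p w_p̄ 𝟙(p,p̄) Q(Γ̄(K,p,p̄; V,V'))] Γ̄(S,p,p̄; V,V'). Then D(V') tends to the metric bracket value (F,S)_h(V) = (1/2) Σ_{p,p̄} Γ(F,p,p̄)ᵀ [ν w_p w_p̄ 𝟙(p,p̄) Q(v_p − v_p̄)] Γ(S,p,p̄) as V' → V. -/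

import Mathlib

open Matrix
open scoped RealInnerProductSpace

/-- The Landau collision kernel `Q(ξ) = (1/‖ξ‖)(I − ξξᵀ/‖ξ‖²)` on ℝ³. -/
noncomputable def landauQ (ξ : EuclideanSpace ℝ (Fin 3)) : Matrix (Fin 3) (Fin 3) ℝ :=
  ‖ξ‖⁻¹ • ((1 : Matrix (Fin 3) (Fin 3) ℝ) - (‖ξ‖ ^ 2)⁻¹ • Matrix.vecMulVec ξ ξ)

/-- Partial gradient of `F : (ℝ³)^N → ℝ` with respect to the velocity `v_p`. -/
noncomputable def gradVp {N : ℕ} (F : (Fin N → EuclideanSpace ℝ (Fin 3)) → ℝ)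
    (V : Fin N → EuclideanSpace ℝ (Fin 3)) (p : Fin N) : EuclideanSpace ℝ (Fin 3) :=
  gradient (fun ξ => F (Function.update V p ξ)) (V p)

/-- The `p`-th `ℝ³` block of the average discrete gradient
`∇̄F(V,V') = ∫₀¹ ∇F((1−t)V + t V') dt`. -/
noncomputable def bGrad {N : ℕ} (F : (Fin N → EuclideanSpace ℝ (Fin 3)) → ℝ)
    (V V' : Fin N → EuclideanSpace ℝ (Fin 3)) (p : Fin N) : EuclideanSpace ℝ (Fin 3) :=
  ∫ t in (0:ℝ)..1, gradVp F ((1 - t) • V + t • V') p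

/-- `Γ̄(F,p,p̄; V,V') = (1/(m w_p)) (∇̄F)_p − (1/(m w_p̄)) (∇̄F)_p̄`. -/
noncomputable def bGamma {N : ℕ} (m : ℝ) (w : Fin N → ℝ)
    (F : (Fin N → EuclideanSpace ℝ (Fin 3)) → ℝ)
    (V V' : Fin N → EuclideanSpace ℝ (Fin 3)) (p q : Fin N) : EuclideanSpace ℝ (Fin 3) :=
  (1 / (m * w p)) • bGrad F V V' p - (1 / (m * w q)) • bGrad F V V' q

/-- `Γ(F,p,p̄) = (1/(m w_p)) ∇_{v_p}F(V) − (1/(m w_p̄)) ∇_{v_p̄}F(V)`. -/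
noncomputable def mGamma {N : ℕ} (m : ℝ) (w : Fin N → ℝ)
    (F : (Fin N → EuclideanSpace ℝ (Fin 3)) → ℝ)
    (V : Fin N → EuclideanSpace ℝ (Fin 3)) (p q : Fin N) : EuclideanSpace ℝ (Fin 3) :=
  (1 / (m * w p)) • gradVp F V p - (1 / (m * w q)) • gradVp F V q

/-- The kinetic energy `K(V) = ½ Σ_p m w_p ‖v_p‖²`. -/
noncomputable def kinE {N : ℕ} (m : ℝ) (w : Fin N → ℝ)
    (V : Fin N → EuclideanSpace ℝ (Fin 3)) : ℝ :=
  (1 / 2) * ∑ p, m * w p * ‖V p‖ ^ 2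


section Aux

local notation "E3" => EuclideanSpace ℝ (Fin 3)

lemma gradVp_eq {N : ℕ} {F : (Fin N → E3) → ℝ} (hF : ContDiff ℝ 1 F)
    (W : Fin N → E3) (p : Fin N) :
    gradVp F W p = (InnerProductSpace.toDual ℝ E3).symm
      ((fderiv ℝ F W).comp (ContinuousLinearMap.pi (Pi.single p (ContinuousLinearMap.id ℝ E3)))) := by
  have h1 : HasFDerivAt (fun ξ : E3 => F (Function.update W p ξ))
      ((fderiv ℝ F W).comp (ContinuousLinearMap.pi (Pi.single p (ContinuousLinearMap.id ℝ E3)))) (W p) := by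
    have h2 := hasFDerivAt_update (𝕜 := ℝ) (i := p) W (W p)
    have h3 : HasFDerivAt F (fderiv ℝ F W) (Function.update W p (W p)) := by
      rw [Function.update_eq_self]
      exact (hF.differentiable one_ne_zero W).hasFDerivAt
    exact h3.comp (W p) h2
  exact (hasFDerivAt_iff_hasGradientAt.mp h1).gradient

lemma continuous_gradVp {N : ℕ} {F : (Fin N → E3) → ℝ} (hF : ContDiff ℝ 1 F) (p : Fin N) :
    Continuous (fun W => gradVp F W p) := by
  have h1 : Continuous (fun W => fderiv ℝ F W) := hF.continuous_fderiv one_ne_zero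
  have h2 : Continuous (fun W => (fderiv ℝ F W).comp
      (ContinuousLinearMap.pi (Pi.single p (ContinuousLinearMap.id ℝ E3)))) :=
    h1.clm_comp continuous_const
  have h3 := ((InnerProductSpace.toDual ℝ E3).symm.continuous.comp h2)
  simp only [gradVp_eq hF]
  exact h3

lemma continuous_bGrad {N : ℕ} {F : (Fin N → E3) → ℝ} (hF : ContDiff ℝ 1 F)
    (V : Fin N → E3) (p : Fin N) : Continuous (fun V' => bGrad F V V' p) := by
  apply intervalIntegral.continuous_parametric_intervalIntegral_of_continuous'
  exact (continuous_gradVp hF p).comp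
    (((continuous_const.sub continuous_snd).smul continuous_const).add
      (continuous_snd.smul continuous_fst))

lemma bGrad_self {N : ℕ} (F : (Fin N → E3) → ℝ) (V : Fin N → E3) (p : Fin N) :
    bGrad F V V p = gradVp F V p := by
  unfold bGrad
  have : ∀ t : ℝ, (1 - t) • V + t • V = V := by
    intro t; rw [← add_smul]; simp
  simp only [this, intervalIntegral.integral_const, sub_zero, one_smul]

lemma contDiff_kinE {N : ℕ} (m : ℝ) (w : Fin N → ℝ) : ContDiff ℝ 1 (kinE (N := N) m w) := by
  unfold kinE
  apply ContDiff.mul contDiff_const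
  apply ContDiff.sum
  intro p _
  exact contDiff_const.mul (((contDiff_norm_sq ℝ).comp (contDiff_apply ℝ E3 p)))

lemma gradVp_kinE {N : ℕ} (m : ℝ) (w : Fin N → ℝ) (W : Fin N → E3) (p : Fin N) :
    gradVp (kinE m w) W p = (m * w p) • W p := by
  have hfun : (fun ξ : E3 => kinE m w (Function.update W p ξ)) =
      fun ξ => (m * w p / 2) * ‖ξ‖ ^ 2 +
        (1 / 2) * ∑ q ∈ Finset.univ.erase p, m * w q * ‖W q‖ ^ 2 := by
    funext ξ
    unfold kinE
    rw [← Finset.add_sum_erase _ _ (Finset.mem_univ p)]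
    have h1 : ∀ q ∈ Finset.univ.erase p,
        m * w q * ‖Function.update W p ξ q‖ ^ 2 = m * w q * ‖W q‖ ^ 2 := by
      intro q hq
      rw [Function.update_of_ne (Finset.ne_of_mem_erase hq)]
    rw [Finset.sum_congr rfl h1, Function.update_self]
    ring
  have hfd : HasFDerivAt (fun ξ : E3 => kinE m w (Function.update W p ξ))
      (InnerProductSpace.toDual ℝ E3 ((m * w p) • W p)) (W p) := by
    rw [hfun]
    have h2 : HasFDerivAt (fun ξ : E3 => ‖ξ‖ ^ 2) (2 • (innerSL ℝ (W p))) (W p) :=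
      (hasStrictFDerivAt_norm_sq (W p)).hasFDerivAt
    have h3 := (h2.const_mul (m * w p / 2)).add_const
      ((1 / 2) * ∑ q ∈ Finset.univ.erase p, m * w q * ‖W q‖ ^ 2)
    refine h3.congr_fderiv ?_
    ext y
    simp [InnerProductSpace.toDual_apply_apply, real_inner_smul_left]
    ring
  have := (hasFDerivAt_iff_hasGradientAt.mp hfd).gradient
  simpa [gradVp] using this

lemma continuousAt_landauQ {ξ₀ : E3} (h : ξ₀ ≠ 0) : ContinuousAt landauQ ξ₀ := by
  have hn : ‖ξ₀‖ ≠ 0 := norm_ne_zero_iff.mpr h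
  have h1 : ContinuousAt (fun ξ : E3 => ‖ξ‖⁻¹) ξ₀ :=
    continuous_norm.continuousAt.inv₀ hn
  have h2 : ContinuousAt (fun ξ : E3 => (‖ξ‖ ^ 2)⁻¹) ξ₀ :=
    (continuous_norm.pow 2).continuousAt.inv₀ (pow_ne_zero 2 hn)
  have hv : Continuous (fun ξ : E3 => Matrix.vecMulVec (ξ : Fin 3 → ℝ) ξ) := by
    apply continuous_matrix
    intro i j
    exact ((EuclideanSpace.proj i).continuous.mul ((EuclideanSpace.proj j).continuous))
  exact h1.smul (continuousAt_const.sub (h2.smul hv.continuousAt))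

lemma continuous_quadForm : Continuous (fun z : E3 × Matrix (Fin 3) (Fin 3) ℝ × E3 =>
    (z.1 : Fin 3 → ℝ) ⬝ᵥ z.2.1.mulVec (z.2.2 : Fin 3 → ℝ)) := by
  have ha : Continuous (fun z : E3 × Matrix (Fin 3) (Fin 3) ℝ × E3 => (z.1 : Fin 3 → ℝ)) :=
    (PiLp.continuous_ofLp _ _).comp continuous_fst
  have hb : Continuous (fun z : E3 × Matrix (Fin 3) (Fin 3) ℝ × E3 => (z.2.2 : Fin 3 → ℝ)) :=
    (PiLp.continuous_ofLp _ _).comp continuous_snd.snd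
  exact ha.dotProduct ((continuous_fst.comp continuous_snd).matrix_mulVec hb)

lemma tendsto_bGamma {N : ℕ} {G : (Fin N → E3) → ℝ} (hG : ContDiff ℝ 1 G)
    (m : ℝ) (w : Fin N → ℝ) (V : Fin N → E3) (p q : Fin N) :
    Filter.Tendsto (fun V' => bGamma m w G V V' p q) (nhds V) (nhds (mGamma m w G V p q)) := by
  have hc : Continuous (fun V' => bGamma m w G V V' p q) :=
    ((continuous_bGrad hG V p).const_smul (1 / (m * w p))).sub ((continuous_bGrad hG V q).const_smul (1 / (m * w q)))
  have := hc.tendsto V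
  simpa [bGamma, mGamma, bGrad_self] using this

end Aux

/-- Consistency of the discrete-gradient-dependent integrator with the
finite-dimensional metric bracket: the discrete collisional rate
`D(V') = ½ Σ_{p,p̄} Γ̄(F,p,p̄;V,V')ᵀ [ν w_p w_p̄ 𝟙(p,p̄) Q(Γ̄(K,p,p̄;V,V'))] Γ̄(S,p,p̄;V,V')`
tends to the metric bracket value `(F,S)_h(V)` as `V' → V`. -/
theorem DGDI_consistency (N : ℕ) (hN : 1 ≤ N) (m : ℝ) (hm : 0 < m)
    (w : Fin N → ℝ) (hw : ∀ p, 0 < w p) (ν : ℝ) (hν : 0 ≤ ν)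
    (ind : Fin N → Fin N → ℝ) (hind01 : ∀ p q, ind p q = 0 ∨ ind p q = 1)
    (hindsymm : ∀ p q, ind p q = ind q p) (hinddiag : ∀ p, ind p p = 0)
    (V : Fin N → EuclideanSpace ℝ (Fin 3))
    (hV : ∀ p q, ind p q = 1 → V p ≠ V q)
    (F S : (Fin N → EuclideanSpace ℝ (Fin 3)) → ℝ)
    (hF : ContDiff ℝ 1 F) (hS : ContDiff ℝ 1 S) :
    Filter.Tendsto
      (fun V' => (1 / 2) * ∑ p, ∑ q, (ν * w p * w q * ind p q) *
        (bGamma m w F V V' p q ⬝ᵥ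
          (landauQ (bGamma m w (kinE m w) V V' p q)).mulVec (bGamma m w S V V' p q)))
      (nhds V)
      (nhds ((1 / 2) * ∑ p, ∑ q, (ν * w p * w q * ind p q) *
        (mGamma m w F V p q ⬝ᵥ
          (landauQ (V p - V q)).mulVec (mGamma m w S V p q)))) := by
  have hmw : ∀ r : Fin N, m * w r ≠ 0 := fun r => (mul_pos hm (hw r)).ne'
  apply Filter.Tendsto.const_mul
  apply tendsto_finset_sum
  intro p _
  apply tendsto_finset_sum
  intro q _
  rcases hind01 p q with h0 | h1
  · simp only [h0, mul_zero, zero_mul]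
    exact tendsto_const_nhds
  · apply Filter.Tendsto.const_mul
    have hbF := tendsto_bGamma hF m w V p q
    have hbS := tendsto_bGamma hS m w V p q
    have hbK : Filter.Tendsto (fun V' => bGamma m w (kinE m w) V V' p q) (nhds V)
        (nhds (V p - V q)) := by
      have h := tendsto_bGamma (contDiff_kinE m w) m w V p q
      have hval : mGamma m w (kinE m w) V p q = V p - V q := by
        simp only [mGamma, gradVp_kinE, smul_smul]
        rw [one_div_mul_cancel (hmw p), one_div_mul_cancel (hmw q), one_smul, one_smul]
      rwa [hval] at h
    have hQ : Filter.Tendsto (fun V' => landauQ (bGamma m w (kinE m w) V V' p q)) (nhds V)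
        (nhds (landauQ (V p - V q))) :=
      (continuousAt_landauQ (sub_ne_zero.mpr (hV p q h1))).tendsto.comp hbK
    have htriple := hbF.prodMk_nhds (hQ.prodMk_nhds hbS)
    have hfin := (continuous_quadForm.continuousAt (x := (mGamma m w F V p q, landauQ (V p - V q),
      mGamma m w S V p q))).tendsto.comp htriple
    exact hfin.congr fun V' => rfl
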